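/- Let φ(x) = ln|x - M| for a fixed point M ∈ ℝⁿ, defined on an open set not containing M. Let a(x,ξ) = |ξ|² - |∇φ(x)|² and b(x,ξ) = 2∇φ(x)·ξ. Then φ is a limiting Carleman weight: ∇φ(x) ≠ 0 everywhere on the domain, and the Poisson bracket {a,b}(x,ξ) vanishes at every point (x,ξ) where a(x,ξ) = 0 and b(x,ξ) = 0. -/

import Mathlib

/-!
With `u = x - M` the weight `φ = log ‖u‖` has gradient `u / ‖u‖²`, so near `x` the symbols are
`a = ‖ξ‖² - ‖u‖⁻²` and `b = 2 ⟪u, ξ⟫ / ‖u‖²`. Computing their four partial gradients gives the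
identity `{a, b} = 4 ‖u‖⁻² a - 2 b²`, which vanishes on `{a = b = 0}`.
-/

open scoped RealInnerProductSpace

noncomputable section

/-- Poisson bracket of two functions a, b : ℝⁿ × ℝⁿ → ℝ (position × frequency):
    {a,b}(x,ξ) = ∇_ξ a · ∇_x b - ∇_x a · ∇_ξ b. -/
def poissonBracket {n : ℕ}
    (a b : EuclideanSpace ℝ (Fin n) → EuclideanSpace ℝ (Fin n) → ℝ)
    (x ξ : EuclideanSpace ℝ (Fin n)) : ℝ :=
  ⟪gradient (a x) ξ, gradient (fun y => b y ξ) x⟫ -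
    ⟪gradient (fun y => a y ξ) x, gradient (b x) ξ⟫

section

variable {F : Type*} [NormedAddCommGroup F] [InnerProductSpace ℝ F] [CompleteSpace F]
  {f g : F → ℝ} {v w x M : F}

theorem HasFDerivAt.hasGradientAt_of_apply_eq_inner {L : F →L[ℝ] ℝ} (hf : HasFDerivAt f L x)
    (hL : ∀ y, L y = ⟪v, y⟫) : HasGradientAt f v x := by
  rw [hasGradientAt_iff_hasFDerivAt]
  exact hf.congr_fderiv (ContinuousLinearMap.ext hL)

theorem HasDerivAt.comp_hasGradientAt (x : F) {h : ℝ → ℝ} {c : ℝ} (hh : HasDerivAt h c (f x))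
    (hf : HasGradientAt f v x) : HasGradientAt (fun y => h (f y)) (c • v) x :=
  (hh.comp_hasFDerivAt x hf.hasFDerivAt).hasGradientAt_of_apply_eq_inner fun y => by
    simp [real_inner_smul_left]

theorem HasGradientAt.const_mul (c : ℝ) (hf : HasGradientAt f v x) :
    HasGradientAt (fun y => c * f y) (c • v) x :=
  (hf.hasFDerivAt.const_mul c).hasGradientAt_of_apply_eq_inner fun y => by
    simp [real_inner_smul_left]

theorem HasGradientAt.const_sub (c : ℝ) (hf : HasGradientAt f v x) :
    HasGradientAt (fun y => c - f y) (-v) x :=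
  (hf.hasFDerivAt.const_sub c).hasGradientAt_of_apply_eq_inner fun y => by simp

theorem HasGradientAt.sub_const (c : ℝ) (hf : HasGradientAt f v x) :
    HasGradientAt (fun y => f y - c) v x :=
  (hf.hasFDerivAt.sub_const c).hasGradientAt_of_apply_eq_inner fun y => by simp

theorem HasGradientAt.mul (hf : HasGradientAt f v x) (hg : HasGradientAt g w x) :
    HasGradientAt (fun y => f y * g y) (f x • w + g x • v) x :=
  (hf.hasFDerivAt.mul hg.hasFDerivAt).hasGradientAt_of_apply_eq_inner fun y => by
    simp [inner_add_left, real_inner_smul_left]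

theorem hasGradientAt_inner_sub (v M x : F) : HasGradientAt (fun y => ⟪v, y - M⟫) v x :=
  ((hasFDerivAt_const v x).inner ℝ ((hasFDerivAt_id x).sub_const M))
    |>.hasGradientAt_of_apply_eq_inner fun y => by simp [fderivInnerCLM_apply, inner_sub_right]

theorem hasGradientAt_norm_sub_sq (M x : F) :
    HasGradientAt (fun y => ‖y - M‖ ^ 2) ((2 : ℝ) • (x - M)) x :=
  ((hasFDerivAt_id x).sub_const M).norm_sq.hasGradientAt_of_apply_eq_inner fun y => by
    simp [real_inner_smul_left, inner_sub_left]

theorem hasGradientAt_inv_norm_sub_sq (hx : x ≠ M) :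
    HasGradientAt (fun y => (‖y - M‖ ^ 2)⁻¹) (-((‖x - M‖ ^ 2) ^ 2)⁻¹ • (2 : ℝ) • (x - M)) x :=
  (hasDerivAt_inv (by simp [sub_eq_zero, hx])).comp_hasGradientAt x
    (hasGradientAt_norm_sub_sq M x)

def logDist (M y : F) : ℝ := Real.log ‖y - M‖

theorem hasGradientAt_logDist (hx : x ≠ M) :
    HasGradientAt (logDist M) ((‖x - M‖ ^ 2)⁻¹ • (x - M)) x := by
  have hr : ‖x - M‖ ^ 2 ≠ 0 := by simp [sub_eq_zero, hx]
  have h := ((Real.hasDerivAt_log hr).div_const 2).comp_hasGradientAt x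
    (hasGradientAt_norm_sub_sq M x)
  convert h using 1
  · funext y
    rw [logDist, Real.log_pow]
    push_cast
    ring
  · rw [smul_smul]
    congr 1
    ring

theorem gradient_logDist (hx : x ≠ M) : gradient (logDist M) x = (‖x - M‖ ^ 2)⁻¹ • (x - M) :=
  (hasGradientAt_logDist hx).gradient

theorem gradient_logDist_ne_zero (hx : x ≠ M) : gradient (logDist M) x ≠ 0 := by
  simp [gradient_logDist hx, sub_eq_zero, hx]

/- `carlemanSymbolRe φ + i carlemanSymbolIm φ` is the principal symbol `(ξ + i∇φ)²` of the
conjugated operator `e^{φ/h} (-h²Δ) e^{-φ/h}`. -/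
def carlemanSymbolRe (φ : F → ℝ) (x ξ : F) : ℝ := ‖ξ‖ ^ 2 - ‖gradient φ x‖ ^ 2

def carlemanSymbolIm (φ : F → ℝ) (x ξ : F) : ℝ := 2 * ⟪gradient φ x, ξ⟫

theorem gradient_carlemanSymbolRe_right (φ : F → ℝ) (x ξ : F) :
    gradient (carlemanSymbolRe φ x) ξ = (2 : ℝ) • ξ := by
  have h := (hasGradientAt_norm_sub_sq 0 ξ).sub_const (‖gradient φ x‖ ^ 2)
  simp only [sub_zero] at h
  exact h.gradient

theorem gradient_carlemanSymbolIm_right (φ : F → ℝ) (x ξ : F) :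
    gradient (carlemanSymbolIm φ x) ξ = (2 : ℝ) • gradient φ x := by
  have h := (hasGradientAt_inner_sub (gradient φ x) 0 ξ).const_mul 2
  simp only [sub_zero] at h
  exact h.gradient

theorem carlemanSymbolRe_logDist (hx : x ≠ M) (ξ : F) :
    carlemanSymbolRe (logDist M) x ξ = ‖ξ‖ ^ 2 - (‖x - M‖ ^ 2)⁻¹ := by
  have hr : ‖x - M‖ ≠ 0 := by simp [sub_eq_zero, hx]
  rw [carlemanSymbolRe, gradient_logDist hx, norm_smul, norm_inv, norm_pow, norm_norm]
  field_simp

theorem carlemanSymbolIm_logDist (hx : x ≠ M) (ξ : F) :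
    carlemanSymbolIm (logDist M) x ξ = 2 * ((‖x - M‖ ^ 2)⁻¹ * ⟪ξ, x - M⟫) := by
  rw [carlemanSymbolIm, gradient_logDist hx, real_inner_smul_left, real_inner_comm]

theorem gradient_carlemanSymbolRe_logDist_left (hx : x ≠ M) (ξ : F) :
    gradient (fun y => carlemanSymbolRe (logDist M) y ξ) x =
      ((‖x - M‖ ^ 2) ^ 2)⁻¹ • (2 : ℝ) • (x - M) := by
  have hnear : (fun y => carlemanSymbolRe (logDist M) y ξ) =ᶠ[nhds x]
      fun y => ‖ξ‖ ^ 2 - (‖y - M‖ ^ 2)⁻¹ := by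
    filter_upwards [eventually_ne_nhds hx] with y hy using carlemanSymbolRe_logDist hy ξ
  rw [hnear.gradient_eq, ((hasGradientAt_inv_norm_sub_sq hx).const_sub _).gradient, neg_smul,
    neg_neg]

theorem gradient_carlemanSymbolIm_logDist_left (hx : x ≠ M) (ξ : F) :
    gradient (fun y => carlemanSymbolIm (logDist M) y ξ) x =
      (2 : ℝ) • ((‖x - M‖ ^ 2)⁻¹ • ξ - (2 * ((‖x - M‖ ^ 2) ^ 2)⁻¹ * ⟪ξ, x - M⟫) • (x - M)) := by
  have hnear : (fun y => carlemanSymbolIm (logDist M) y ξ) =ᶠ[nhds x]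
      fun y => 2 * ((‖y - M‖ ^ 2)⁻¹ * ⟪ξ, y - M⟫) := by
    filter_upwards [eventually_ne_nhds hx] with y hy using carlemanSymbolIm_logDist hy ξ
  have hprod := (hasGradientAt_inv_norm_sub_sq hx).mul (hasGradientAt_inner_sub ξ M x)
  rw [hnear.gradient_eq, (hprod.const_mul 2).gradient]
  module

end

theorem poissonBracket_carlemanSymbol_logDist {n : ℕ} {M x : EuclideanSpace ℝ (Fin n)}
    (hx : x ≠ M) (ξ : EuclideanSpace ℝ (Fin n)) :
    poissonBracket (carlemanSymbolRe (logDist M)) (carlemanSymbolIm (logDist M)) x ξ =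
      4 * (‖x - M‖ ^ 2)⁻¹ * carlemanSymbolRe (logDist M) x ξ -
        2 * carlemanSymbolIm (logDist M) x ξ ^ 2 := by
  have hr : ‖x - M‖ ≠ 0 := by simp [sub_eq_zero, hx]
  rw [poissonBracket, gradient_carlemanSymbolRe_right, gradient_carlemanSymbolIm_right,
    gradient_carlemanSymbolRe_logDist_left hx, gradient_carlemanSymbolIm_logDist_left hx,
    carlemanSymbolRe_logDist hx, carlemanSymbolIm_logDist hx, gradient_logDist hx]
  generalize x - M = u at hr ⊢
  simp only [inner_sub_right, real_inner_smul_left, real_inner_smul_right,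
    real_inner_self_eq_norm_sq, real_inner_comm ξ]
  field_simp
  ring

theorem log_dist_is_limiting_carleman_weight_general {n : ℕ}
    (M : EuclideanSpace ℝ (Fin n)) (U : Set (EuclideanSpace ℝ (Fin n)))
    (hM : M ∉ U)
    (φ : EuclideanSpace ℝ (Fin n) → ℝ)
    (hφ : ∀ x, φ x = Real.log ‖x - M‖)
    (a b : EuclideanSpace ℝ (Fin n) → EuclideanSpace ℝ (Fin n) → ℝ)
    (ha : ∀ x ξ, a x ξ = ‖ξ‖ ^ 2 - ‖gradient φ x‖ ^ 2)
    (hb : ∀ x ξ, b x ξ = 2 * ⟪gradient φ x, ξ⟫) :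
    ∀ x ∈ U, gradient φ x ≠ 0 ∧
      ∀ ξ : EuclideanSpace ℝ (Fin n), a x ξ = 0 → b x ξ = 0 →
        poissonBracket a b x ξ = 0 := by
  intro x hxU
  have hx : x ≠ M := ne_of_mem_of_not_mem hxU hM
  obtain rfl : φ = logDist M := funext hφ
  obtain rfl : a = carlemanSymbolRe (logDist M) := funext₂ ha
  obtain rfl : b = carlemanSymbolIm (logDist M) := funext₂ hb
  refine ⟨gradient_logDist_ne_zero hx, fun ξ ha₀ hb₀ => ?_⟩
  rw [poissonBracket_carlemanSymbol_logDist hx, ha₀, hb₀]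
  ring

theorem log_dist_is_limiting_carleman_weight {n : ℕ}
    (M : EuclideanSpace ℝ (Fin n)) (U : Set (EuclideanSpace ℝ (Fin n)))
    (hU : IsOpen U) (hM : M ∉ U)
    (φ : EuclideanSpace ℝ (Fin n) → ℝ)
    (hφ : ∀ x, φ x = Real.log ‖x - M‖)
    (a b : EuclideanSpace ℝ (Fin n) → EuclideanSpace ℝ (Fin n) → ℝ)
    (ha : ∀ x ξ, a x ξ = ‖ξ‖ ^ 2 - ‖gradient φ x‖ ^ 2)
    (hb : ∀ x ξ, b x ξ = 2 * ⟪gradient φ x, ξ⟫) :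
    ∀ x ∈ U, gradient φ x ≠ 0 ∧
      ∀ ξ : EuclideanSpace ℝ (Fin n), a x ξ = 0 → b x ξ = 0 →
        poissonBracket a b x ξ = 0 :=
  log_dist_is_limiting_carleman_weight_general M U hM φ hφ a b ha hb
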